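/- arXiv:math/9905187 — 2 statements merged into one kernel-verified Lean document; each statement's English description precedes it below -/
import Mathlib

section
/- In the Heisenberg algebra H₂ with [p,q] = iε, let S(a,b) denote the symmetrized (Wick-ordered) product of a copies of p and b copies of q (the average over all permutations of the word p^a q^b). Then S(a,b) = Σ_{r=0}^{min(a,b)} ((-iε/2)^r / r!) · (a!/(a-r)!) · (b!/(b-r)!) · p^{a-r} q^{b-r}. -/
open Finset

/-! ### Auxiliary machinery -/

section PermSum

variable {A : Type*} [Ring A] [Algebra ℂ A]

/-- Sum over all permutations of the word given by `h`. -/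
noncomputable def permSum {n : ℕ} (h : Fin n → A) : A :=
  ∑ σ : Equiv.Perm (Fin n), (List.ofFn fun i => h (σ i)).prod

lemma permSum_comp {n : ℕ} (h : Fin n → A) (τ : Equiv.Perm (Fin n)) :
    permSum (fun i => h (τ i)) = permSum h := by
  unfold permSum
  exact Fintype.sum_bijective (fun σ => τ * σ) (Group.mulLeft_bijective τ) _ _ (fun σ => rfl)

lemma permSum_succ {n : ℕ} (h : Fin (n + 1) → A) :
    permSum h =
      ∑ j : Fin (n + 1), h j * permSum (fun i : Fin n => h (Equiv.swap 0 j i.succ)) := by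
  rw [permSum, ← (Equiv.Perm.decomposeFin (n := n)).symm.sum_comp, Fintype.sum_prod_type]
  refine Finset.sum_congr rfl fun j _ => ?_
  rw [permSum, Finset.mul_sum]
  refine Finset.sum_congr rfl fun e _ => ?_
  rw [List.ofFn_succ]
  simp [List.prod_cons]

lemma swap_word_lt {n a : ℕ} (p q : A) (j : Fin (n + 1)) (hj : (j : ℕ) < a) :
    (fun i : Fin n => if ((Equiv.swap 0 j i.succ : Fin (n + 1)) : ℕ) < a then p else q)
      = fun i : Fin n => if (i : ℕ) < a - 1 then p else q := by
  funext i
  have hjn := j.isLt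
  simp only [Equiv.swap_apply_def, Fin.ext_iff, Fin.val_succ, Fin.val_zero,
    apply_ite (Fin.val)]
  split_ifs <;> first | rfl | contradiction | (exfalso; omega)

lemma swap_word_ge {n a : ℕ} (p q : A) (j : Fin (n + 1)) (ha : 1 ≤ a) (hj : a ≤ (j : ℕ)) :
    permSum (fun i : Fin n => if ((Equiv.swap 0 j i.succ : Fin (n + 1)) : ℕ) < a then p else q)
      = permSum (fun i : Fin n => if (i : ℕ) < a then p else q) := by
  have hjn : (j : ℕ) ≤ n := Nat.lt_succ_iff.mp j.isLt
  have h1 : a - 1 < n := by omega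
  have h2 : (j : ℕ) - 1 < n := by omega
  rw [← permSum_comp (fun i : Fin n => if (i : ℕ) < a then p else q)
      (Equiv.swap ⟨a - 1, h1⟩ ⟨(j : ℕ) - 1, h2⟩)]
  congr 1
  funext i
  simp only [Equiv.swap_apply_def, Fin.ext_iff, Fin.val_succ, Fin.val_zero,
    apply_ite (Fin.val)]
  split_ifs <;> first | rfl | contradiction | (exfalso; omega)

lemma permSum_const {n : ℕ} (x : A) :
    permSum (fun _ : Fin n => x) = n.factorial • x ^ n := by
  unfold permSum
  simp [List.ofFn_const, Finset.sum_const, Fintype.card_perm]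

lemma count_sum {n a b : ℕ} (hab : a + b = n + 1) (X Y : A) :
    ∑ j : Fin (n + 1), (if (j : ℕ) < a then X else Y) = a • X + b • Y := by
  rw [Fin.sum_univ_eq_sum_range (fun j => if j < a then X else Y) (n + 1)]
  have ha : a ≤ n + 1 := by omega
  rw [← Finset.sum_range_add_sum_Ico _ ha]
  congr 1
  · rw [Finset.sum_congr rfl (fun j hj => if_pos (Finset.mem_range.1 hj)), Finset.sum_const,
      Finset.card_range]
  · rw [Finset.sum_congr rfl (fun j hj => if_neg (by
        have := (Finset.mem_Ico.1 hj).1; omega)), Finset.sum_const, Nat.card_Ico]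
    congr 1
    omega

end PermSum

/-! ### Coefficients -/

noncomputable def wc (a b r : ℕ) : ℂ :=
  (-Complex.I / 2) ^ r / r.factorial * a.descFactorial r * b.descFactorial r

lemma wc_eq_zero {a b r : ℕ} (h : a < r ∨ b < r) : wc a b r = 0 := by
  rcases h with h | h <;> simp [wc, Nat.descFactorial_eq_zero_iff_lt.2 h]

lemma desc_nat (m r : ℕ) :
    (m + 1) * m.descFactorial r = (m + 1 - r) * (m + 1).descFactorial r := by
  rw [← Nat.succ_descFactorial_succ, Nat.descFactorial_succ]

lemma dlem (m r : ℕ) :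
    ((m : ℂ) + 1) * (m.descFactorial r : ℂ) =
      (((m : ℂ) + 1) - r) * ((m + 1).descFactorial r : ℂ) := by
  rcases le_or_gt r (m + 1) with h | h
  · have h1 : (((m + 1) * m.descFactorial r : ℕ) : ℂ)
        = (((m + 1 - r) * (m + 1).descFactorial r : ℕ) : ℂ) := by
      exact_mod_cast congrArg (Nat.cast (R := ℂ)) (desc_nat m r)
    push_cast [Nat.cast_sub h] at h1
    linear_combination h1
  · have h1 : m.descFactorial r = 0 := Nat.descFactorial_eq_zero_iff_lt.2 (by omega)
    have h2 : (m + 1).descFactorial r = 0 := Nat.descFactorial_eq_zero_iff_lt.2 (by omega)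
    simp [h1, h2]

lemma ci3 (Aa Bb r : ℕ) :
    ((Aa + 1 : ℕ) : ℂ) * wc Aa (Bb + 1) r + ((Bb + 1 : ℕ) : ℂ) * wc (Aa + 1) Bb r
      = (((Aa + 1) + (Bb + 1) : ℂ) - 2 * r) * wc (Aa + 1) (Bb + 1) r := by
  unfold wc
  push_cast
  linear_combination ((-Complex.I / 2) ^ r / r.factorial * ((Bb + 1).descFactorial r)) * dlem Aa r
    + ((-Complex.I / 2) ^ r / r.factorial * ((Aa + 1).descFactorial r)) * dlem Bb r

lemma ci4 (Aa Bb r : ℕ) :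
    ((Bb + 1 : ℕ) : ℂ) * wc (Aa + 1) Bb r * (((Aa + 1) - r : ℕ) : ℂ) * Complex.I
      = (-2 : ℂ) * ((r : ℂ) + 1) * wc (Aa + 1) (Bb + 1) (r + 1) := by
  have e1 : (((Aa + 1).descFactorial (r + 1) : ℕ) : ℂ)
      = (((Aa + 1) - r : ℕ) : ℂ) * ((Aa + 1).descFactorial r : ℂ) := by
    exact_mod_cast congrArg (Nat.cast (R := ℂ)) (Nat.descFactorial_succ (Aa + 1) r)
  have e2 : (((Bb + 1).descFactorial (r + 1) : ℕ) : ℂ)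
      = ((Bb + 1 : ℕ) : ℂ) * (Bb.descFactorial r : ℂ) := by
    exact_mod_cast congrArg (Nat.cast (R := ℂ)) (Nat.succ_descFactorial_succ Bb r)
  have e3 : (((r + 1).factorial : ℕ) : ℂ) = ((r : ℂ) + 1) * (r.factorial : ℂ) := by
    push_cast [Nat.factorial_succ]; ring
  have hf : (r.factorial : ℂ) ≠ 0 := Nat.cast_ne_zero.2 r.factorial_ne_zero
  have hr1 : ((r : ℂ) + 1) ≠ 0 := by
    exact_mod_cast Nat.cast_ne_zero (R := ℂ).2 (Nat.succ_ne_zero r)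
  unfold wc
  rw [e1, e2, e3, pow_succ]
  field_simp

/-! ### The normally ordered sum and commutation lemmas -/

section Alg

variable {A : Type*} [Ring A] [Algebra ℂ A]
variable (p q ε : A) (hεp : ε * p = p * ε) (hεq : ε * q = q * ε)
  (hpq : p * q - q * p = Complex.I • ε)

noncomputable def NN (p q ε : A) (a b M : ℕ) : A :=
  ∑ r ∈ Finset.range M, wc a b r • (ε ^ r * (p ^ (a - r) * q ^ (b - r)))

lemma NN_ext (a b M M' : ℕ) (hM : min a b + 1 ≤ M) (hM' : min a b + 1 ≤ M') :
    NN p q ε a b M = NN p q ε a b M' := by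
  have key : ∀ M'', min a b + 1 ≤ M'' →
      NN p q ε a b M'' = NN p q ε a b (min a b + 1) := by
    intro M'' h
    refine (Finset.sum_subset (Finset.range_subset_range.2 h) fun r _ hr => ?_).symm
    have hlt : min a b < r := by
      have := Finset.mem_range.not.1 hr
      omega
    rw [wc_eq_zero (by omega : a < r ∨ b < r), zero_smul]
  rw [key M hM, key M' hM']

lemma eps_pow_comm (x : A) (hx : ε * x = x * ε) (r : ℕ) : ε ^ r * x = x * ε ^ r :=
  ((Commute.pow_left (hx : Commute ε x) r)).eq

include hεp in
lemma p_eps (r k : ℕ) (X : A) : p * (ε ^ r * (p ^ k * X)) = ε ^ r * (p ^ (k + 1) * X) := by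
  rw [← mul_assoc, ← eps_pow_comm ε p hεp r, mul_assoc, ← mul_assoc p (p ^ k), ← pow_succ']

include hεp in
lemma eps_shift (r k m : ℕ) :
    ε ^ r * ((p ^ k * ε) * q ^ m) = ε ^ (r + 1) * (p ^ k * q ^ m) := by
  rw [← (Commute.pow_right (hεp : Commute ε p) k).eq, mul_assoc ε (p ^ k), ← mul_assoc,
    ← pow_succ]

include hεp hpq in
lemma qp_pow : ∀ m : ℕ, q * p ^ m = p ^ m * q - ((m : ℂ) * Complex.I) • (p ^ (m - 1) * ε) := by
  have hqp : q * p = p * q - Complex.I • ε := by rw [← hpq]; abel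
  intro m
  induction m with
  | zero => simp
  | succ m ih =>
    rcases m with _ | s
    · simpa using hqp
    · have hc : ε * p ^ (s + 1) = p ^ (s + 1) * ε :=
        (Commute.pow_right hεp (s + 1)).eq
      rw [pow_succ' p (s + 1), ← mul_assoc, hqp, sub_mul, mul_assoc, ih, mul_sub,
        smul_mul_assoc, hc, Nat.add_sub_cancel, Nat.add_sub_cancel, mul_smul_comm,
        ← mul_assoc p (p ^ s) ε, ← pow_succ', ← mul_assoc p (p ^ (s + 1)) q, ← pow_succ']
      push_cast
      module

include hεp hεq hpq in
lemma q_eps (r i j : ℕ) :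
    q * (ε ^ r * (p ^ i * q ^ j))
      = ε ^ r * (p ^ i * q ^ (j + 1))
        - ((i : ℂ) * Complex.I) • (ε ^ (r + 1) * (p ^ (i - 1) * q ^ j)) := by
  rw [← mul_assoc, ← eps_pow_comm ε q hεq r, mul_assoc, ← mul_assoc q (p ^ i),
    qp_pow p q ε hεp hpq i, sub_mul, smul_mul_assoc, mul_sub, mul_smul_comm,
    mul_assoc (p ^ i) q (q ^ j), ← pow_succ' q j, eps_shift p q ε hεp r (i - 1) j]

include hεp hεq hpq in
lemma key_alg (Aa Bb : ℕ) :
    ((Aa + 1 : ℕ) : ℂ) • (p * NN p q ε Aa (Bb + 1) (Aa + Bb + 4)) +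
      ((Bb + 1 : ℕ) : ℂ) • (q * NN p q ε (Aa + 1) Bb (Aa + Bb + 4)) =
      ((Aa + 1 + (Bb + 1) : ℕ) : ℂ) • NN p q ε (Aa + 1) (Bb + 1) (Aa + Bb + 4) := by
  set F : ℕ → A := fun r => ε ^ r * (p ^ (Aa + 1 - r) * q ^ (Bb + 1 - r)) with hF
  have h1 : ((Aa + 1 : ℕ) : ℂ) • (p * NN p q ε Aa (Bb + 1) (Aa + Bb + 4))
      = ∑ r ∈ Finset.range (Aa + Bb + 4), (((Aa + 1 : ℕ) : ℂ) * wc Aa (Bb + 1) r) • F r := by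
    rw [NN, Finset.mul_sum, Finset.smul_sum]
    refine Finset.sum_congr rfl fun r _ => ?_
    by_cases hra : r ≤ Aa
    · rw [mul_smul_comm, smul_smul, p_eps p ε hεp r (Aa - r) _, hF]
      have : Aa - r + 1 = Aa + 1 - r := by omega
      rw [this]
    · rw [wc_eq_zero (Or.inl (show Aa < r by omega))]
      simp
  have h2 : ((Bb + 1 : ℕ) : ℂ) • (q * NN p q ε (Aa + 1) Bb (Aa + Bb + 4))
      = (∑ r ∈ Finset.range (Aa + Bb + 4), (((Bb + 1 : ℕ) : ℂ) * wc (Aa + 1) Bb r) • F r)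
        + ∑ r ∈ Finset.range (Aa + Bb + 4),
            ((2 : ℂ) * ((r : ℂ) + 1) * wc (Aa + 1) (Bb + 1) (r + 1)) • F (r + 1) := by
    rw [NN, Finset.mul_sum, Finset.smul_sum, ← Finset.sum_add_distrib]
    refine Finset.sum_congr rfl fun r _ => ?_
    by_cases hrb : r ≤ Bb
    · rw [mul_smul_comm, smul_smul, q_eps p q ε hεp hεq hpq r (Aa + 1 - r) (Bb - r),
        smul_sub, smul_smul]
      have e1 : Bb - r + 1 = Bb + 1 - r := by omega
      have e2 : Aa + 1 - r - 1 = Aa + 1 - (r + 1) := by omega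
      have e3 : Bb - r = Bb + 1 - (r + 1) := by omega
      rw [e1, e2, e3, sub_eq_add_neg, ← neg_smul, hF]
      congr 2
      have h := ci4 Aa Bb r
      push_cast at h ⊢
      linear_combination -h
    · rw [wc_eq_zero (Or.inr (show Bb < r by omega)),
        wc_eq_zero (Or.inr (show Bb + 1 < r + 1 by omega))]
      simp
  have hshift : ∑ r ∈ Finset.range (Aa + Bb + 4),
        ((2 : ℂ) * ((r : ℂ) + 1) * wc (Aa + 1) (Bb + 1) (r + 1)) • F (r + 1)
      = ∑ r ∈ Finset.range (Aa + Bb + 4),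
        ((2 : ℂ) * (r : ℂ) * wc (Aa + 1) (Bb + 1) r) • F r := by
    rw [Finset.sum_range_succ'
      (fun r => ((2 : ℂ) * (r : ℂ) * wc (Aa + 1) (Bb + 1) r) • F r) (Aa + Bb + 3)]
    rw [Finset.sum_range_succ
      (fun r => ((2 : ℂ) * ((r : ℂ) + 1) * wc (Aa + 1) (Bb + 1) (r + 1)) • F (r + 1))
      (Aa + Bb + 3)]
    rw [wc_eq_zero (Or.inl (show Aa + 1 < Aa + Bb + 3 + 1 by omega))]
    simp only [Nat.cast_zero, mul_zero, zero_mul, zero_smul, add_zero, smul_zero]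
    refine Finset.sum_congr rfl fun r _ => ?_
    congr 2
    push_cast
    ring
  have hR : ((Aa + 1 + (Bb + 1) : ℕ) : ℂ) • NN p q ε (Aa + 1) (Bb + 1) (Aa + Bb + 4)
      = (∑ r ∈ Finset.range (Aa + Bb + 4), (((Aa + 1 : ℕ) : ℂ) * wc Aa (Bb + 1) r) • F r)
        + ((∑ r ∈ Finset.range (Aa + Bb + 4), (((Bb + 1 : ℕ) : ℂ) * wc (Aa + 1) Bb r) • F r)
        + ∑ r ∈ Finset.range (Aa + Bb + 4),
            ((2 : ℂ) * (r : ℂ) * wc (Aa + 1) (Bb + 1) r) • F r) := by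
    rw [NN, Finset.smul_sum, ← Finset.sum_add_distrib, ← Finset.sum_add_distrib]
    refine Finset.sum_congr rfl fun r _ => ?_
    rw [smul_smul, ← add_smul, ← add_smul]
    congr 1
    have h := ci3 Aa Bb r
    push_cast at h ⊢
    linear_combination -h
  rw [h1, h2, hshift, hR]

include hεp hεq hpq in
lemma main_lemma : ∀ n a b : ℕ, a + b = n →
    permSum (fun i : Fin n => if (i : ℕ) < a then p else q)
      = (n.factorial : ℂ) • NN p q ε a b (a + b + 2) := by
  intro n
  induction n with
  | zero =>
    intro a b hab
    obtain rfl : a = 0 := by omega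
    obtain rfl : b = 0 := by omega
    have h0 : permSum (fun i : Fin 0 => if (i : ℕ) < 0 then p else q) = 1 := by
      rw [permSum]
      simp
    rw [h0, NN, Finset.sum_range_succ, Finset.sum_range_succ, Finset.sum_range_zero]
    simp [wc]
  | succ n IH =>
    intro a b hab
    rcases a with _ | Aa
    · obtain rfl : b = n + 1 := by omega
      have hfun : (fun i : Fin (n + 1) => if (i : ℕ) < 0 then p else q) = fun _ => q := by
        funext i; simp
      have hNN : NN p q ε 0 (n + 1) (0 + (n + 1) + 2) = q ^ (n + 1) := by
        rw [NN, Finset.sum_eq_single 0]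
        · simp [wc]
        · intro r _ hr0
          rw [wc_eq_zero (Or.inl (Nat.pos_of_ne_zero hr0)), zero_smul]
        · intro h
          exact absurd (Finset.mem_range.2 (by omega)) h
      rw [hfun, permSum_const, hNN]
      exact (Nat.cast_smul_eq_nsmul ℂ _ _).symm
    rcases b with _ | Bb
    · obtain rfl : Aa = n := by omega
      have hfun : (fun i : Fin (Aa + 1) => if (i : ℕ) < Aa + 1 then p else q) = fun _ => p := by
        funext i
        exact if_pos i.isLt
      have hNN : NN p q ε (Aa + 1) 0 (Aa + 1 + 0 + 2) = p ^ (Aa + 1) := by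
        rw [NN, Finset.sum_eq_single 0]
        · simp [wc]
        · intro r _ hr0
          rw [wc_eq_zero (Or.inr (Nat.pos_of_ne_zero hr0)), zero_smul]
        · intro h
          exact absurd (Finset.mem_range.2 (by omega)) h
      rw [hfun, permSum_const, hNN]
      exact (Nat.cast_smul_eq_nsmul ℂ _ _).symm
    · -- both positive
      have hterm : ∀ j : Fin (n + 1),
          (if ((j : Fin (n + 1)) : ℕ) < Aa + 1 then p else q) *
              permSum (fun i : Fin n =>
                if ((Equiv.swap 0 j i.succ : Fin (n + 1)) : ℕ) < Aa + 1 then p else q)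
            = if (j : ℕ) < Aa + 1 then
                p * permSum (fun i : Fin n => if (i : ℕ) < Aa then p else q)
              else
                q * permSum (fun i : Fin n => if (i : ℕ) < Aa + 1 then p else q) := by
        intro j
        by_cases hj : (j : ℕ) < Aa + 1
        · rw [if_pos hj, if_pos hj, swap_word_lt p q j hj]
          norm_num
        · rw [if_neg hj, if_neg hj, swap_word_ge p q j (by omega) (by omega)]
      rw [permSum_succ, Finset.sum_congr rfl (fun j _ => hterm j),
        count_sum (by omega : (Aa + 1) + (Bb + 1) = n + 1)]
      rw [IH Aa (Bb + 1) (by omega), IH (Aa + 1) Bb (by omega)]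
      rw [NN_ext p q ε Aa (Bb + 1) (Aa + (Bb + 1) + 2) (Aa + Bb + 4) (by omega) (by omega)]
      rw [NN_ext p q ε (Aa + 1) Bb (Aa + 1 + Bb + 2) (Aa + Bb + 4) (by omega) (by omega)]
      have e1 : (Aa + 1) • (p * ((n.factorial : ℂ) • NN p q ε Aa (Bb + 1) (Aa + Bb + 4)))
          = (n.factorial : ℂ) •
              (((Aa + 1 : ℕ) : ℂ) • (p * NN p q ε Aa (Bb + 1) (Aa + Bb + 4))) := by
        rw [mul_smul_comm, ← Nat.cast_smul_eq_nsmul ℂ, smul_smul, smul_smul, mul_comm]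
      have e2 : (Bb + 1) • (q * ((n.factorial : ℂ) • NN p q ε (Aa + 1) Bb (Aa + Bb + 4)))
          = (n.factorial : ℂ) •
              (((Bb + 1 : ℕ) : ℂ) • (q * NN p q ε (Aa + 1) Bb (Aa + Bb + 4))) := by
        rw [mul_smul_comm, ← Nat.cast_smul_eq_nsmul ℂ, smul_smul, smul_smul, mul_comm]
      rw [e1, e2, ← smul_add, key_alg p q ε hεp hεq hpq Aa Bb, smul_smul]
      have hM : Aa + 1 + (Bb + 1) + 2 = Aa + Bb + 4 := by omega
      rw [hM]
      congr 1
      have hn : Aa + 1 + (Bb + 1) = n + 1 := by omega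
      rw [hn, Nat.factorial_succ]
      push_cast
      ring

end Alg

/-- The symmetrized (Wick-ordered) product of `a` copies of `p` and `b` copies of `q`:
the average over all `(a+b)!` orderings (each distinct word counted with
multiplicity `a!·b!`, so this equals the sum over distinct orderings divided by
the multinomial coefficient `(a+b)!/(a!b!)`). -/
noncomputable def wickMonomial {A : Type*} [Ring A] [Algebra ℂ A]
    (p q : A) (a b : ℕ) : A :=
  (((a + b).factorial : ℂ))⁻¹ •
    ∑ σ : Equiv.Perm (Fin (a + b)),
      (List.ofFn (fun i : Fin (a + b) => if ((σ i : Fin (a + b)) : ℕ) < a then p else q)).prod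

/-- In the Heisenberg algebra with `[p,q] = iε`,
`S(a,b) = Σ_{r=0}^{min(a,b)} ((-iε/2)^r/r!)·(a!/(a-r)!)·(b!/(b-r)!)·p^{a-r}q^{b-r}`. -/
theorem wick_eq_sum_normal
    {A : Type*} [Ring A] [Algebra ℂ A] (p q ε : A)
    (hεp : ε * p = p * ε) (hεq : ε * q = q * ε)
    (hpq : p * q - q * p = Complex.I • ε)
    (a b : ℕ) :
    wickMonomial p q a b =
      ∑ r ∈ Finset.range (min a b + 1),
        ((((-Complex.I / 2) ^ r / (r.factorial : ℂ)) *
          (a.descFactorial r : ℂ) * (b.descFactorial r : ℂ)) •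
          (ε ^ r * (p ^ (a - r) * q ^ (b - r)))) := by
  have hps : wickMonomial p q a b
      = (((a + b).factorial : ℂ))⁻¹ •
          permSum (fun i : Fin (a + b) => if (i : ℕ) < a then p else q) := rfl
  rw [hps, main_lemma p q ε hεp hεq hpq (a + b) a b rfl, smul_smul,
    inv_mul_cancel₀ (Nat.cast_ne_zero.2 (Nat.factorial_ne_zero _)), one_smul,
    NN_ext p q ε a b (a + b + 2) (min a b + 1) (by omega) (by omega)]
  rfl
end

section
/- The normal-ordering star product on polynomials in two commuting variables p, q, defined by u ⋆_N v = Σ_{r≥0} ((-iε)^r / r!) (∂^r u/∂q^r)(∂^r v/∂p^r), is associative. -/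
open MvPolynomial Finset

abbrev P3 := MvPolynomial (Fin 3) ℂ

/-- The normal-ordering star product on `ℂ[p,q,ε]` (variables `0 = p`, `1 = q`, `2 = ε`):
`u ⋆_N v = Σ_r ((-i ε)^r / r!) (∂_q^r u)(∂_p^r v)`.
The sum is finite on polynomials: the truncation bound is harmless since
`∂^r u = 0` for `r > totalDegree u`. -/
noncomputable def starNormal (u v : MvPolynomial (Fin 3) ℂ) : MvPolynomial (Fin 3) ℂ :=
  ∑ r ∈ Finset.range (u.totalDegree + v.totalDegree + 1),
    (((-Complex.I) ^ r / (r.factorial : ℂ)) •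
      ((X 2) ^ r * ((⇑(pderiv (1 : Fin 3)))^[r] u * (⇑(pderiv (0 : Fin 3)))^[r] v)))

noncomputable def cc (r : ℕ) : ℂ := (-Complex.I) ^ r / (r.factorial : ℂ)

noncomputable def Tm (u v : P3) (r : ℕ) : P3 :=
  C (cc r) * ((X 2) ^ r * ((⇑(pderiv (1 : Fin 3)))^[r] u * (⇑(pderiv (0 : Fin 3)))^[r] v))

lemma td_pderiv_le (i : Fin 3) (f : P3) {n : ℕ} (h : f.totalDegree ≤ n + 1) :
    ((pderiv i) f).totalDegree ≤ n := by
  conv_lhs => rw [f.as_sum, map_sum]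
  refine (totalDegree_finset_sum _ _).trans (Finset.sup_le fun s hs => ?_)
  rw [pderiv_monomial]
  rcases eq_or_ne (coeff s f * (s i : ℂ)) 0 with h0 | h0
  · simp [h0]
  · rw [totalDegree_monomial _ h0]
    have hsi : s i ≠ 0 := by
      intro hsi; apply h0; simp [hsi]
    have hle : (Finsupp.single i 1) ≤ s := by
      rw [Finsupp.single_le_iff]; omega
    have hrec : (s - Finsupp.single i 1) + Finsupp.single i 1 = s :=
      tsub_add_cancel_of_le hle
    have hsum : ((s - Finsupp.single i 1).sum fun _ e => e) + 1 = s.sum fun _ e => e := by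
      conv_rhs => rw [← hrec]
      rw [Finsupp.sum_add_index' (fun _ => rfl) (fun _ _ _ => rfl)]
      simp
    have hts : s.sum (fun _ e => e) ≤ n + 1 :=
      le_trans (le_totalDegree (by simpa using hs)) h
    omega

lemma pderiv_iterate_eq_zero (i : Fin 3) {f : P3} {r : ℕ} (h : f.totalDegree < r) :
    (⇑(pderiv i))^[r] f = 0 := by
  induction r generalizing f with
  | zero => omega
  | succ n ih =>
    rw [Function.iterate_succ_apply]
    rcases Nat.eq_zero_or_pos n with hn | hn
    · subst hn
      have h0 : f.totalDegree = 0 := by omega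
      have : (pderiv i) f = 0 := by
        rw [f.as_sum, map_sum]
        refine Finset.sum_eq_zero fun s hs => ?_
        rw [pderiv_monomial]
        have := (totalDegree_eq_zero_iff _ f).mp h0 s hs i
        simp [this]
      simp [this]
    · exact ih (lt_of_le_of_lt (td_pderiv_le i f (show f.totalDegree ≤ (n-1)+1 by omega))
        (by omega))

lemma pderiv_pderiv_comm (i j : Fin 3) (f : P3) :
    (pderiv i) ((pderiv j) f) = (pderiv j) ((pderiv i) f) := by
  induction f using MvPolynomial.induction_on with
  | C a => simp
  | add p q hp hq => simp [hp, hq]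
  | mul_X p k hp =>
    have hXi : ∀ (a b : Fin 3), (pderiv a) ((pderiv b) (X k : P3)) = 0 := by
      intro a b
      rcases eq_or_ne k b with h | h
      · subst h; simp
      · simp [pderiv_X_of_ne h]
    simp only [pderiv_mul, map_add, pderiv_mul, hp, hXi]
    ring

lemma fcomm01 : Function.Commute (⇑(pderiv (0 : Fin 3)) : P3 → P3) (⇑(pderiv (1 : Fin 3))) :=
  fun f => pderiv_pderiv_comm 0 1 f

lemma iterate_comm01 (a b : ℕ) (f : P3) :
    (⇑(pderiv (0 : Fin 3)))^[a] ((⇑(pderiv (1 : Fin 3)))^[b] f)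
      = (⇑(pderiv (1 : Fin 3)))^[b] ((⇑(pderiv (0 : Fin 3)))^[a] f) :=
  fcomm01.iterate_iterate a b f

lemma pderiv_X2_pow_mul (i : Fin 3) (hi : i ≠ 2) (n : ℕ) (f : P3) :
    (pderiv i) ((X 2 : P3) ^ n * f) = X 2 ^ n * (pderiv i) f := by
  rw [pderiv_mul, pderiv_pow, pderiv_X_of_ne (Ne.symm hi)]
  ring

lemma pderiv_iterate_X2_pow_mul (i : Fin 3) (hi : i ≠ 2) (n r : ℕ) (f : P3) :
    (⇑(pderiv i))^[r] ((X 2 : P3) ^ n * f) = X 2 ^ n * (⇑(pderiv i))^[r] f := by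
  induction r generalizing f with
  | zero => simp
  | succ m ih => rw [Function.iterate_succ_apply, pderiv_X2_pow_mul i hi, ih, ← Function.iterate_succ_apply]

lemma pderiv_iterate_mul (i : Fin 3) (p q : P3) (n : ℕ) :
    (⇑(pderiv i))^[n] (p * q) =
      ∑ k ∈ range n.succ, (n.choose k • ((⇑(pderiv i))^[n - k] p * (⇑(pderiv i))^[k] q)) := by
  induction n with
  | zero => simp [Finset.range]
  | succ n IH =>
    calc
      (⇑(pderiv i))^[n + 1] (p * q) =
          (pderiv i) (∑ k ∈ range n.succ,
              n.choose k • ((⇑(pderiv i))^[n - k] p * (⇑(pderiv i))^[k] q)) := by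
        rw [Function.iterate_succ_apply', IH]
      _ = (∑ k ∈ range n.succ,
            n.choose k • ((⇑(pderiv i))^[n - k + 1] p * (⇑(pderiv i))^[k] q)) +
          ∑ k ∈ range n.succ,
            n.choose k • ((⇑(pderiv i))^[n - k] p * (⇑(pderiv i))^[k + 1] q) := by
        simp_rw [map_sum, map_nsmul, pderiv_mul, Function.iterate_succ_apply',
          smul_add, sum_add_distrib]
      _ = (∑ k ∈ range n.succ,
                n.choose k.succ • ((⇑(pderiv i))^[n - k] p * (⇑(pderiv i))^[k + 1] q)) +
              1 • ((⇑(pderiv i))^[n + 1] p * (⇑(pderiv i))^[0] q) +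
            ∑ k ∈ range n.succ, n.choose k • ((⇑(pderiv i))^[n - k] p * (⇑(pderiv i))^[k + 1] q) :=
        ?_
      _ = ((∑ k ∈ range n.succ, n.choose k • ((⇑(pderiv i))^[n - k] p * (⇑(pderiv i))^[k + 1] q)) +
              ∑ k ∈ range n.succ,
                n.choose k.succ • ((⇑(pderiv i))^[n - k] p * (⇑(pderiv i))^[k + 1] q)) +
            1 • ((⇑(pderiv i))^[n + 1] p * (⇑(pderiv i))^[0] q) := by
        rw [add_comm, add_assoc]
      _ = (∑ j ∈ range n.succ,
              (n + 1).choose (j + 1) • ((⇑(pderiv i))^[n + 1 - (j + 1)] p * (⇑(pderiv i))^[j + 1] q)) +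
            1 • ((⇑(pderiv i))^[n + 1] p * (⇑(pderiv i))^[0] q) := by
        simp_rw [Nat.choose_succ_succ, Nat.succ_sub_succ, add_smul, sum_add_distrib]
      _ = ∑ k ∈ range n.succ.succ,
            n.succ.choose k • ((⇑(pderiv i))^[n.succ - k] p * (⇑(pderiv i))^[k] q) := by
        rw [sum_range_succ' _ n.succ, Nat.choose_zero_right, tsub_zero]
    congr
    refine (sum_range_succ' _ _).trans (congr_arg₂ (· + ·) ?_ ?_)
    · rw [sum_range_succ, Nat.choose_succ_self, zero_smul, add_zero]
      refine sum_congr rfl fun k hk => ?_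
      rw [mem_range] at hk
      congr
      omega
    · rw [Nat.choose_zero_right, tsub_zero]

lemma pderiv_iterate_C_mul (i : Fin 3) (a : ℂ) (n : ℕ) (f : P3) :
    (⇑(pderiv i))^[n] (C a * f) = C a * (⇑(pderiv i))^[n] f := by
  induction n generalizing f with
  | zero => simp
  | succ m ih => rw [Function.iterate_succ_apply, pderiv_C_mul, ih, ← Function.iterate_succ_apply]

lemma coeff_id (r k m : ℕ) :
    cc (k + m) * cc r * ((k + m).choose k : ℂ)
      = (-Complex.I) ^ (r + k + m) / ((r.factorial : ℂ) * k.factorial * m.factorial) := by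
  rw [Nat.cast_choose ℂ (Nat.le_add_right k m), Nat.add_sub_cancel_left]
  have h1 : ((k + m).factorial : ℂ) ≠ 0 := Nat.cast_ne_zero.mpr (Nat.factorial_ne_zero _)
  have h2 : ((k).factorial : ℂ) ≠ 0 := Nat.cast_ne_zero.mpr (Nat.factorial_ne_zero _)
  have h3 : ((m).factorial : ℂ) ≠ 0 := Nat.cast_ne_zero.mpr (Nat.factorial_ne_zero _)
  have h4 : ((r).factorial : ℂ) ≠ 0 := Nat.cast_ne_zero.mpr (Nat.factorial_ne_zero _)
  unfold cc
  field_simp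
  ring

lemma starNormal_eq_sum (u v : P3) {N : ℕ} (hN : u.totalDegree + v.totalDegree + 1 ≤ N) :
    starNormal u v = ∑ r ∈ range N, Tm u v r := by
  have h0 : starNormal u v = ∑ r ∈ range (u.totalDegree + v.totalDegree + 1), Tm u v r := by
    unfold starNormal Tm
    exact Finset.sum_congr rfl fun r _ => by rw [smul_eq_C_mul]; rfl
  rw [h0]
  apply Finset.sum_subset (range_subset_range.mpr hN)
  intro r _ hr
  rw [mem_range, not_lt] at hr
  have : (⇑(pderiv (1 : Fin 3)))^[r] u = 0 := pderiv_iterate_eq_zero _ (by omega)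
  simp [Tm, this]

-- LHS building blocks
noncomputable def Bl (u v w : P3) (s r k : ℕ) : P3 :=
  C (cc s * cc r * (s.choose k : ℂ)) *
    ((X 2 : P3) ^ (s + r) *
      ((⇑(pderiv (1 : Fin 3)))^[(s - k) + r] u *
        ((⇑(pderiv (1 : Fin 3)))^[k] ((⇑(pderiv (0 : Fin 3)))^[r] v) *
          (⇑(pderiv (0 : Fin 3)))^[s] w)))

noncomputable def G (u v w : P3) (r k m : ℕ) : P3 :=
  C ((-Complex.I) ^ (r + k + m) / ((r.factorial : ℂ) * k.factorial * m.factorial)) *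
    ((X 2 : P3) ^ (k + m + r) *
      ((⇑(pderiv (1 : Fin 3)))^[m + r] u *
        ((⇑(pderiv (1 : Fin 3)))^[k] ((⇑(pderiv (0 : Fin 3)))^[r] v) *
          (⇑(pderiv (0 : Fin 3)))^[k + m] w)))

lemma lhs_term (u v w : P3) (s r : ℕ) :
    Tm (Tm u v r) w s = ∑ k ∈ range (s + 1), Bl u v w s r k := by
  unfold Tm
  rw [pderiv_iterate_C_mul, pderiv_iterate_X2_pow_mul 1 (by decide), pderiv_iterate_mul]
  rw [Nat.succ_eq_add_one]
  simp only [Finset.mul_sum, Finset.sum_mul]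
  refine Finset.sum_congr rfl fun k hk => ?_
  unfold Bl
  rw [← Function.iterate_add_apply, nsmul_eq_mul, ← map_natCast (C : ℂ →+* P3), map_mul, map_mul]
  ring

lemma pderiv_iterate_sum (i : Fin 3) (s : ℕ) {ι : Type*} (t : Finset ι) (f : ι → P3) :
    (⇑(pderiv i))^[s] (∑ x ∈ t, f x) = ∑ x ∈ t, (⇑(pderiv i))^[s] (f x) := by
  induction s with
  | zero => simp
  | succ n ih =>
    rw [Function.iterate_succ_apply', ih, map_sum]
    exact Finset.sum_congr rfl fun x _ => (Function.iterate_succ_apply' _ _ _).symm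

lemma lhs_term' (u v w : P3) {N : ℕ} (s r : ℕ) (hs : s < N) :
    Tm (Tm u v r) w s = ∑ k ∈ range N, Bl u v w s r k := by
  rw [lhs_term]
  apply Finset.sum_subset (range_subset_range.mpr hs)
  intro k _ hk
  rw [mem_range, not_lt] at hk
  have : s.choose k = 0 := Nat.choose_eq_zero_of_lt (by omega)
  simp [Bl, this]

lemma lhs_s_sum (u v w : P3) {N : ℕ} (hw : w.totalDegree < N) (r k : ℕ) :
    ∑ s ∈ range N, Bl u v w s r k = ∑ m ∈ range N, G u v w r k m := by
  have hext : ∑ s ∈ range N, Bl u v w s r k = ∑ s ∈ range (k + N), Bl u v w s r k := by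
    apply Finset.sum_subset (range_subset_range.mpr (Nat.le_add_left N k))
    intro s _ hsN
    rw [mem_range, not_lt] at hsN
    have : (⇑(pderiv (0 : Fin 3)))^[s] w = 0 := pderiv_iterate_eq_zero _ (by omega)
    simp [Bl, this]
  rw [hext, Finset.sum_range_add]
  have h0 : ∑ s ∈ range k, Bl u v w s r k = 0 := by
    apply Finset.sum_eq_zero
    intro s hs
    rw [mem_range] at hs
    have : s.choose k = 0 := Nat.choose_eq_zero_of_lt hs
    simp [Bl, this]
  rw [h0, zero_add]
  refine Finset.sum_congr rfl fun m _ => ?_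
  unfold Bl G
  rw [Nat.add_sub_cancel_left, coeff_id]

lemma lhs_eq (u v w : P3) {N : ℕ} (hw : w.totalDegree < N) :
    ∑ s ∈ range N, Tm (∑ r ∈ range N, Tm u v r) w s
      = ∑ r ∈ range N, ∑ k ∈ range N, ∑ m ∈ range N, G u v w r k m := by
  have step1 : ∀ s ∈ range N, Tm (∑ r ∈ range N, Tm u v r) w s
      = ∑ r ∈ range N, ∑ k ∈ range N, Bl u v w s r k := by
    intro s hs
    rw [mem_range] at hs
    have : Tm (∑ r ∈ range N, Tm u v r) w s = ∑ r ∈ range N, Tm (Tm u v r) w s := by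
      unfold Tm
      rw [pderiv_iterate_sum]
      simp only [Finset.sum_mul, Finset.mul_sum]
    rw [this]
    exact Finset.sum_congr rfl fun r _ => lhs_term' u v w s r hs
  rw [Finset.sum_congr rfl step1]
  rw [Finset.sum_comm]
  refine Finset.sum_congr rfl fun r _ => ?_
  rw [Finset.sum_comm]
  exact Finset.sum_congr rfl fun k _ => lhs_s_sum u v w hw r k

-- RHS building blocks
noncomputable def Br (u v w : P3) (s r k : ℕ) : P3 :=
  C (cc s * cc r * (s.choose k : ℂ)) *
    ((X 2 : P3) ^ (s + r) *
      ((⇑(pderiv (1 : Fin 3)))^[s] u *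
        ((⇑(pderiv (0 : Fin 3)))^[s - k] ((⇑(pderiv (1 : Fin 3)))^[r] v) *
          (⇑(pderiv (0 : Fin 3)))^[k + r] w)))

lemma rhs_term (u v w : P3) (s r : ℕ) :
    Tm u (Tm v w r) s = ∑ k ∈ range (s + 1), Br u v w s r k := by
  unfold Tm
  rw [pderiv_iterate_C_mul, pderiv_iterate_X2_pow_mul 0 (by decide), pderiv_iterate_mul]
  rw [Nat.succ_eq_add_one]
  simp only [Finset.mul_sum, Finset.sum_mul]
  refine Finset.sum_congr rfl fun k hk => ?_
  unfold Br
  rw [← Function.iterate_add_apply, nsmul_eq_mul, ← map_natCast (C : ℂ →+* P3), map_mul, map_mul]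
  ring

lemma rhs_term' (u v w : P3) {N : ℕ} (s r : ℕ) (hs : s < N) :
    Tm u (Tm v w r) s = ∑ k ∈ range N, Br u v w s r k := by
  rw [rhs_term]
  apply Finset.sum_subset (range_subset_range.mpr hs)
  intro k _ hk
  rw [mem_range, not_lt] at hk
  have : s.choose k = 0 := Nat.choose_eq_zero_of_lt (by omega)
  simp [Br, this]

lemma rhs_s_sum (u v w : P3) {N : ℕ} (hu : u.totalDegree < N) (r k : ℕ) :
    ∑ s ∈ range N, Br u v w s r k = ∑ m ∈ range N, G u v w m r k := by
  have hext : ∑ s ∈ range N, Br u v w s r k = ∑ s ∈ range (k + N), Br u v w s r k := by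
    apply Finset.sum_subset (range_subset_range.mpr (Nat.le_add_left N k))
    intro s _ hsN
    rw [mem_range, not_lt] at hsN
    have : (⇑(pderiv (1 : Fin 3)))^[s] u = 0 := pderiv_iterate_eq_zero _ (by omega)
    simp [Br, this]
  rw [hext, Finset.sum_range_add]
  have h0 : ∑ s ∈ range k, Br u v w s r k = 0 := by
    apply Finset.sum_eq_zero
    intro s hs
    rw [mem_range] at hs
    have : s.choose k = 0 := Nat.choose_eq_zero_of_lt hs
    simp [Br, this]
  rw [h0, zero_add]
  refine Finset.sum_congr rfl fun m _ => ?_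
  unfold Br G
  have hc : cc (k + m) * cc r * ((k + m).choose k : ℂ)
      = (-Complex.I) ^ (m + r + k) / ((m.factorial : ℂ) * r.factorial * k.factorial) := by
    rw [coeff_id]
    ring
  rw [Nat.add_sub_cancel_left, iterate_comm01, hc, show k + r = r + k from Nat.add_comm k r]
  ring

lemma rhs_eq (u v w : P3) {N : ℕ} (hu : u.totalDegree < N) :
    ∑ s ∈ range N, Tm u (∑ r ∈ range N, Tm v w r) s
      = ∑ r ∈ range N, ∑ k ∈ range N, ∑ m ∈ range N, G u v w m r k := by
  have step1 : ∀ s ∈ range N, Tm u (∑ r ∈ range N, Tm v w r) s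
      = ∑ r ∈ range N, ∑ k ∈ range N, Br u v w s r k := by
    intro s hs
    rw [mem_range] at hs
    have : Tm u (∑ r ∈ range N, Tm v w r) s = ∑ r ∈ range N, Tm u (Tm v w r) s := by
      unfold Tm
      rw [pderiv_iterate_sum]
      simp only [Finset.sum_mul, Finset.mul_sum]
    rw [this]
    exact Finset.sum_congr rfl fun r _ => rhs_term' u v w s r hs
  rw [Finset.sum_congr rfl step1]
  rw [Finset.sum_comm]
  refine Finset.sum_congr rfl fun r _ => ?_
  rw [Finset.sum_comm]
  exact Finset.sum_congr rfl fun k _ => rhs_s_sum u v w hu r k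

lemma perm_sum (f : ℕ → ℕ → ℕ → P3) (N : ℕ) :
    ∑ r ∈ range N, ∑ k ∈ range N, ∑ m ∈ range N, f m r k
      = ∑ r ∈ range N, ∑ k ∈ range N, ∑ m ∈ range N, f r k m := by
  calc ∑ r ∈ range N, ∑ k ∈ range N, ∑ m ∈ range N, f m r k
      = ∑ k ∈ range N, ∑ r ∈ range N, ∑ m ∈ range N, f m r k := Finset.sum_comm
    _ = ∑ k ∈ range N, ∑ m ∈ range N, ∑ r ∈ range N, f m r k :=
        Finset.sum_congr rfl fun k _ => Finset.sum_comm
    _ = ∑ m ∈ range N, ∑ k ∈ range N, ∑ r ∈ range N, f m r k := Finset.sum_comm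
    _ = ∑ m ∈ range N, ∑ r ∈ range N, ∑ k ∈ range N, f m r k :=
        Finset.sum_congr rfl fun m _ => Finset.sum_comm

/-- The normal-ordering star product is associative. -/
theorem starNormal_assoc (u v w : MvPolynomial (Fin 3) ℂ) :
    starNormal (starNormal u v) w = starNormal u (starNormal v w) := by
  obtain ⟨N, h1, h2, h3, h4, h5, h6⟩ :
      ∃ N, (starNormal u v).totalDegree + w.totalDegree + 1 ≤ N ∧
        u.totalDegree + v.totalDegree + 1 ≤ N ∧
        u.totalDegree + (starNormal v w).totalDegree + 1 ≤ N ∧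
        v.totalDegree + w.totalDegree + 1 ≤ N ∧
        w.totalDegree < N ∧ u.totalDegree < N :=
    ⟨(starNormal u v).totalDegree + (starNormal v w).totalDegree +
      u.totalDegree + v.totalDegree + w.totalDegree + 1,
      by omega, by omega, by omega, by omega, by omega, by omega⟩
  calc starNormal (starNormal u v) w
      = ∑ s ∈ range N, Tm (starNormal u v) w s := starNormal_eq_sum _ _ h1
    _ = ∑ s ∈ range N, Tm (∑ r ∈ range N, Tm u v r) w s := by
        rw [← starNormal_eq_sum u v h2]
    _ = ∑ r ∈ range N, ∑ k ∈ range N, ∑ m ∈ range N, G u v w r k m := lhs_eq u v w h5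
    _ = ∑ r ∈ range N, ∑ k ∈ range N, ∑ m ∈ range N, G u v w m r k :=
        (perm_sum (G u v w) N).symm
    _ = ∑ s ∈ range N, Tm u (∑ r ∈ range N, Tm v w r) s := (rhs_eq u v w h6).symm
    _ = ∑ s ∈ range N, Tm u (starNormal v w) s := by rw [← starNormal_eq_sum v w h4]
    _ = starNormal u (starNormal v w) := (starNormal_eq_sum u _ h3).symm
end
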